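/- Corollary (group size identification): under the assumptions of the main identification theorem, the probability of the relevant complier event is identified as P(c(G, Z) = 1) = E[h(Z)·D], where h is constructed as in the theorem from λ_S = E[c(g(S), Z)]. -/

import Mathlib

open MeasureTheory ProbabilityTheory Matrix

/-- `Γ(z)`: the vector of subset products over nonempty subsets of `{1,…,J}`. -/
def GamB (J : ℕ) (z : Fin J → Bool) (S : {S : Finset (Fin J) // S.Nonempty}) : ℝ :=
  ∏ j ∈ S.1, if z j then 1 else 0

/-- `E[Γ(Z)]`. -/
noncomputable def EGamB {Ω : Type*} [MeasurableSpace Ω] (μ : Measure Ω) {J : ℕ}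
    (Z : Ω → Fin J → Bool) (S : {S : Finset (Fin J) // S.Nonempty}) : ℝ :=
  ∫ ω, GamB J (Z ω) S ∂μ

/-- `Σ = Var(Γ(Z))`. -/
noncomputable def SigB {Ω : Type*} [MeasurableSpace Ω] (μ : Measure Ω) {J : ℕ}
    (Z : Ω → Fin J → Bool) :
    Matrix {S : Finset (Fin J) // S.Nonempty} {S : Finset (Fin J) // S.Nonempty} ℝ :=
  Matrix.of fun S T =>
    ∫ ω, (GamB J (Z ω) S - EGamB μ Z S) * (GamB J (Z ω) T - EGamB μ Z T) ∂μ

/-- `h(z) = λ'Σ⁻¹(Γ(z) − EΓ)`. -/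
noncomputable def hB {Ω : Type*} [MeasurableSpace Ω] (μ : Measure Ω) {J : ℕ}
    (Z : Ω → Fin J → Bool) (lam : {S : Finset (Fin J) // S.Nonempty} → ℝ)
    (z : Fin J → Bool) : ℝ :=
  lam ⬝ᵥ ((SigB μ Z)⁻¹ *ᵥ fun S => GamB J z S - EGamB μ Z S)

/-- The indicator vector of a subset `S`. -/
def chi {J : ℕ} (S : Finset (Fin J)) : Fin J → Bool := fun j => decide (j ∈ S)

/-- The Sperner family `F(g)` of a monotone boolean function `g`. -/
def spernerOf {J : ℕ} (g : (Fin J → Bool) → Bool) : Finset (Finset (Fin J)) :=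
  Finset.univ.filter fun S =>
    g (chi S) = true ∧ ∀ T ⊆ S, T ≠ S → g (chi T) = false

/-- The inclusion-exclusion coefficient `M_{F,S'}`. -/
def Mcoef {J : ℕ} (F : Finset (Finset (Fin J))) (S' : Finset (Fin J)) : ℝ :=
  ∑ f ∈ F.powerset.filter (fun f => f.Nonempty ∧ f.sup id = S'),
    (-1 : ℝ) ^ (f.card + 1)

/-- Property M for a weighting function `c : G × Z → {0,1}`. -/
def PropM {J : ℕ} {γ : Type*} (Dg : γ → (Fin J → Bool) → Bool)
    (gS : Finset (Fin J) → γ) (c : γ → (Fin J → Bool) → ℝ) : Prop :=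
  (∀ g z, c g z = 0 ∨ c g z = 1) ∧
  (∀ g, Dg g = (fun _ => true) → ∀ z, c g z = 0) ∧
  (∀ g, Dg g = (fun _ => false) → ∀ z, c g z = 0) ∧
  (∀ g, Dg g ≠ (fun _ => true) → Dg g ≠ (fun _ => false) → ∀ z,
    c g z = ∑ S' ∈ Finset.univ.filter (fun S' : Finset (Fin J) => S'.Nonempty),
      Mcoef (spernerOf (Dg g)) S' * c (gS S') z)

/-!
Since `G ⊥ Z` and both variables are finite-valued, each side is an average over the groups `g`
of a finite sum against the law `q` of `Z`, so it suffices to fix `g`. If `D_g` is not constant,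
inclusion-exclusion over its minimal true points writes `D_g` as a constant plus
`∑_S M_{F(D_g),S} Γ_S`, hence `Cov(Γ, D_g) = Σ M` and `E[h(Z) D_g(Z)] = λ'Σ⁻¹Σ M = λ'M`, which is
`E[c(g, Z)]` by Property M. `Σ` is invertible because `q` has full support and the `Γ_S` are
linearly independent together with the constants. If `D_g` is constant, both sides vanish:
`c(g, ·) = 0` and `E[h(Z)] = 0`.
-/

open Finset

abbrev NonemptySubset (J : ℕ) := {S : Finset (Fin J) // S.Nonempty}

lemma Finset.sum_eq_add_sum_nonemptySubset {J : ℕ} (f : Finset (Fin J) → ℝ) :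
    ∑ S, f S = f ∅ + ∑ S : NonemptySubset J, f S.1 := by
  rw [← add_sum_erase _ _ (mem_univ ∅)]
  congr 1
  exact sum_subtype _ (fun S => by simp [nonempty_iff_ne_empty]) f

lemma sum_mul_dotProduct_mulVec {α ι : Type*} [Fintype α] [Fintype ι] (r : α → ℝ)
    (lam : ι → ℝ) (A : Matrix ι ι ℝ) (w : α → ι → ℝ) :
    ∑ z, r z * lam ⬝ᵥ (A *ᵥ w z) = lam ⬝ᵥ (A *ᵥ fun i => ∑ z, r z * w z i) := by
  simp only [dotProduct, mulVec, mul_sum]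
  rw [sum_comm]
  refine sum_congr rfl fun i _ => ?_
  rw [sum_comm]
  refine sum_congr rfl fun k _ => ?_
  exact sum_congr rfl fun z _ => by ring

section InclusionExclusion

variable {J : ℕ}

lemma prod_prod_boole_eq_prod_sup (z : Fin J → Bool) (F : Finset (Finset (Fin J))) :
    ∏ S ∈ F, ∏ j ∈ S, (if z j then (1 : ℝ) else 0) = ∏ j ∈ F.sup id, if z j then 1 else 0 := by
  simp only [prod_boole]
  by_cases h : ∀ j ∈ F.sup id, z j = true
  · rw [if_pos h]
    exact prod_eq_one fun S hS => if_pos fun j hj => h j (mem_sup.2 ⟨S, hS, hj⟩)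
  · obtain ⟨j, hj, hzj⟩ := not_forall₂.1 h
    obtain ⟨S, hS, hjS⟩ := mem_sup.1 hj
    rw [if_neg h]
    exact prod_eq_zero hS (if_neg fun hz => hzj (hz j hjS))

lemma sum_Mcoef_mul (F : Finset (Finset (Fin J))) (P : Finset (Fin J) → ℝ) :
    ∑ S, Mcoef F S * P S = ∑ f ∈ F.powerset with f.Nonempty, (-1) ^ (#f + 1) * P (f.sup id) := by
  rw [← sum_fiberwise _ (fun f : Finset (Finset (Fin J)) => f.sup id)]
  refine sum_congr rfl fun S _ => ?_
  rw [Mcoef, sum_mul, filter_filter]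
  exact sum_congr rfl fun f hf => by rw [(mem_filter.1 hf).2.2]

lemma one_sub_prod_one_sub_eq_sum_Mcoef (F : Finset (Finset (Fin J))) (z : Fin J → Bool) :
    1 - ∏ S ∈ F, (1 - ∏ j ∈ S, if z j then (1 : ℝ) else 0)
      = ∑ S, Mcoef F S * ∏ j ∈ S, if z j then (1 : ℝ) else 0 := by
  have hempty : F.powerset.filter (fun f => ¬ f.Nonempty) = {∅} := by
    ext f
    simp only [mem_filter, mem_powerset, not_nonempty_iff_eq_empty, mem_singleton]
    exact ⟨And.right, fun h => ⟨h ▸ empty_subset F, h⟩⟩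
  rw [sum_Mcoef_mul, prod_sub, ← sum_filter_add_sum_filter_not _ (fun f => f.Nonempty), hempty,
    sum_singleton]
  simp only [prod_const_one, mul_one, prod_prod_boole_eq_prod_sup, card_empty, pow_zero,
    prod_empty, pow_succ, mul_neg_one, neg_mul, sum_neg_distrib]
  ring

lemma exists_mem_spernerOf_subset {g : (Fin J → Bool) → Bool} {S : Finset (Fin J)}
    (hS : g (chi S) = true) : ∃ T ∈ spernerOf g, T ⊆ S := by
  induction S using Finset.strongInduction with
  | _ S ih =>
    by_cases hmin : ∀ T ⊆ S, T ≠ S → g (chi T) = false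
    · exact ⟨S, mem_filter.2 ⟨mem_univ _, hS, hmin⟩, subset_rfl⟩
    · push Not at hmin
      obtain ⟨T, hTS, hne, hT⟩ := hmin
      obtain ⟨U, hU, hUT⟩ := ih T (Finset.ssubset_iff_subset_ne.2 ⟨hTS, hne⟩) (by simpa using hT)
      exact ⟨U, hU, hUT.trans hTS⟩

lemma Monotone.eq_true_iff_exists_mem_spernerOf {g : (Fin J → Bool) → Bool} (hg : Monotone g)
    (z : Fin J → Bool) : g z = true ↔ ∃ S ∈ spernerOf g, ∀ j ∈ S, z j = true := by
  constructor
  · intro hz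
    have hchi : chi {j | z j = true} = z := by
      funext j
      simp [chi]
    obtain ⟨S, hS, hsub⟩ := exists_mem_spernerOf_subset (g := g) (hchi ▸ hz)
    exact ⟨S, hS, fun j hj => by simpa using hsub hj⟩
  · rintro ⟨S, hS, hz⟩
    have hle : chi S ≤ z := fun j => by
      by_cases hj : j ∈ S <;> simp [chi, hj, hz]
    exact le_antisymm (Bool.le_true _) ((mem_filter.1 hS).2.1 ▸ hg hle)

/-- Inclusion-exclusion over the minimal true points: `g z = 1 - ∏_{S ∈ F(g)} (1 - Γ_S(z))`. -/
lemma Monotone.boole_eq_sum_Mcoef {g : (Fin J → Bool) → Bool} (hg : Monotone g)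
    (z : Fin J → Bool) :
    (if g z then (1 : ℝ) else 0)
      = ∑ S, Mcoef (spernerOf g) S * ∏ j ∈ S, if z j then (1 : ℝ) else 0 := by
  rw [← one_sub_prod_one_sub_eq_sum_Mcoef]
  simp only [prod_boole, hg.eq_true_iff_exists_mem_spernerOf z]
  split_ifs with h
  · obtain ⟨S, hS, hz⟩ := h
    rw [prod_eq_zero hS (by rw [if_pos hz, sub_self]), sub_zero]
  · rw [prod_eq_one fun S hS => by rw [if_neg fun hz => h ⟨S, hS, hz⟩, sub_zero], sub_self]

end InclusionExclusion

section Moments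

variable {J : ℕ} (q : (Fin J → Bool) → ℝ)

def meanGam (S : NonemptySubset J) : ℝ := ∑ z, q z * GamB J z S

def covGam : Matrix (NonemptySubset J) (NonemptySubset J) ℝ :=
  of fun S T => ∑ z, q z * ((GamB J z S - meanGam q S) * (GamB J z T - meanGam q T))

variable {q}

lemma sum_mul_sub_meanGam (hq : ∑ z, q z = 1) (S : NonemptySubset J) :
    ∑ z, q z * (GamB J z S - meanGam q S) = 0 := by
  simp only [mul_sub, sum_sub_distrib, ← sum_mul, hq, one_mul, meanGam, sub_self]

lemma sum_mul_GamB_mul_sub_meanGam (hq : ∑ z, q z = 1) (S T : NonemptySubset J) :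
    ∑ z, q z * (GamB J z T * (GamB J z S - meanGam q S)) = covGam q S T := by
  have hsplit : ∀ z, q z * (GamB J z T * (GamB J z S - meanGam q S))
      = q z * ((GamB J z S - meanGam q S) * (GamB J z T - meanGam q T))
        + meanGam q T * (q z * (GamB J z S - meanGam q S)) := fun z => by ring
  simp only [hsplit, sum_add_distrib, ← mul_sum, sum_mul_sub_meanGam hq, mul_zero, add_zero,
    covGam, of_apply]

lemma GamB_chi (T : Finset (Fin J)) (S : NonemptySubset J) :
    GamB J (chi T) S = if S.1 ⊆ T then 1 else 0 := by
  rw [GamB, prod_boole]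
  congr 1
  simp [chi, subset_iff]

lemma eq_zero_of_forall_sum_mul_boole_subset {v : NonemptySubset J → ℝ}
    (hv : ∀ T, ∑ S : NonemptySubset J, v S * (if S.1 ⊆ T then 1 else 0) = 0) : v = 0 := by
  suffices h : ∀ T (hT : T.Nonempty), v ⟨T, hT⟩ = 0 from funext fun S => h S.1 S.2
  intro T
  induction T using Finset.strongInduction with
  | _ T ih =>
    intro hT
    have hsum := hv T
    rwa [sum_eq_single_of_mem (⟨T, hT⟩ : NonemptySubset J) (mem_univ _), if_pos subset_rfl,
      mul_one] at hsum
    intro S _ hST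
    by_cases hsub : S.1 ⊆ T
    · rw [ih S.1 (Finset.ssubset_iff_subset_ne.2 ⟨hsub, fun h => hST (Subtype.ext h)⟩) S.2,
        zero_mul]
    · rw [if_neg hsub, mul_zero]

lemma eq_zero_of_forall_sum_mul_GamB_eq {v : NonemptySubset J → ℝ} {k : ℝ}
    (hv : ∀ z, ∑ S, v S * GamB J z S = k) : v = 0 := by
  have hk : k = 0 := by
    rw [← hv (chi ∅)]
    exact sum_eq_zero fun S _ => by
      rw [GamB_chi, if_neg fun h => S.2.ne_empty (subset_empty.1 h), mul_zero]
  refine eq_zero_of_forall_sum_mul_boole_subset fun T => ?_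
  simpa only [GamB_chi, hk] using hv (chi T)

lemma dotProduct_covGam_mulVec (v : NonemptySubset J → ℝ) :
    v ⬝ᵥ (covGam q *ᵥ v) = ∑ z, q z * (∑ S, v S * (GamB J z S - meanGam q S)) ^ 2 := by
  simp only [dotProduct, mulVec, covGam, of_apply, mul_sum, sum_mul, sq]
  refine (sum_congr rfl fun S _ => sum_comm).trans (sum_comm.trans ?_)
  exact sum_congr rfl fun z _ => sum_congr rfl fun S _ => sum_congr rfl fun T _ => by ring

lemma det_covGam_ne_zero (hpos : ∀ z, 0 < q z) : (covGam q).det ≠ 0 := by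
  intro hdet
  obtain ⟨v, hv0, hv⟩ := exists_mulVec_eq_zero_iff.2 hdet
  have hquad := dotProduct_covGam_mulVec (q := q) v
  rw [hv, dotProduct_zero, eq_comm, sum_eq_zero_iff_of_nonneg fun z _ =>
    mul_nonneg (hpos z).le (sq_nonneg (∑ S, v S * (GamB J z S - meanGam q S)))] at hquad
  have hconst : ∀ z, ∑ S, v S * GamB J z S = ∑ S, v S * meanGam q S := fun z => by
    have := hquad z (mem_univ z)
    rw [mul_eq_zero, or_iff_right (hpos z).ne', sq_eq_zero_iff] at this
    simpa only [mul_sub, sum_sub_distrib, sub_eq_zero] using this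
  exact hv0 (eq_zero_of_forall_sum_mul_GamB_eq hconst)

end Moments

section Identification

variable {J : ℕ} (q : (Fin J → Bool) → ℝ)

noncomputable def hGam (lam : NonemptySubset J → ℝ) (z : Fin J → Bool) : ℝ :=
  lam ⬝ᵥ ((covGam q)⁻¹ *ᵥ fun S => GamB J z S - meanGam q S)

variable {q}

lemma sum_mul_hGam_eq_zero (hq : ∑ z, q z = 1) (lam : NonemptySubset J → ℝ) :
    ∑ z, q z * hGam q lam z = 0 := by
  simp only [hGam, sum_mul_dotProduct_mulVec, sum_mul_sub_meanGam hq]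
  rw [← Pi.zero_def, mulVec_zero, dotProduct_zero]

lemma sum_mul_boole_mul_sub_meanGam (hq : ∑ z, q z = 1) {g : (Fin J → Bool) → Bool}
    (hg : Monotone g) :
    (fun S => ∑ z, q z * (if g z then 1 else 0) * (GamB J z S - meanGam q S))
      = covGam q *ᵥ fun S => Mcoef (spernerOf g) S.1 := by
  funext S
  simp only [hg.boole_eq_sum_Mcoef, sum_eq_add_sum_nonemptySubset, prod_empty, mul_add, add_mul,
    sum_add_distrib, mul_sum, sum_mul]
  rw [sum_comm]
  have hconst : ∑ z, q z * (Mcoef (spernerOf g) ∅ * 1) * (GamB J z S - meanGam q S) = 0 := by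
    rw [← mul_zero (Mcoef (spernerOf g) ∅), ← sum_mul_sub_meanGam hq S, mul_sum]
    exact sum_congr rfl fun z _ => by ring
  rw [hconst, zero_add, mulVec, dotProduct]
  refine sum_congr rfl fun T _ => ?_
  rw [← sum_mul_GamB_mul_sub_meanGam hq, sum_mul]
  exact sum_congr rfl fun z _ => by simp only [GamB]; ring

lemma sum_mul_hGam_mul_boole (hq : ∑ z, q z = 1) (hpos : ∀ z, 0 < q z)
    (lam : NonemptySubset J → ℝ) {g : (Fin J → Bool) → Bool} (hg : Monotone g) :
    ∑ z, q z * (hGam q lam z * if g z then 1 else 0)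
      = ∑ S : NonemptySubset J, Mcoef (spernerOf g) S.1 * lam S := by
  calc ∑ z, q z * (hGam q lam z * if g z then 1 else 0)
      = ∑ z, q z * (if g z then 1 else 0) * hGam q lam z :=
        sum_congr rfl fun z _ => by ring
    _ = lam ⬝ᵥ ((covGam q)⁻¹ *ᵥ (covGam q *ᵥ fun S => Mcoef (spernerOf g) S.1)) := by
        rw [← sum_mul_boole_mul_sub_meanGam hq hg]
        exact sum_mul_dotProduct_mulVec _ _ _ _
    _ = ∑ S : NonemptySubset J, Mcoef (spernerOf g) S.1 * lam S := by
        rw [mulVec_mulVec, nonsing_inv_mul _ (isUnit_iff_ne_zero.2 (det_covGam_ne_zero hpos)),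
          one_mulVec, dotProduct_comm, dotProduct]

end Identification

lemma PropM.sum_mul_eq_sum_mul_hGam_mul_boole {J : ℕ} {q : (Fin J → Bool) → ℝ} {γ : Type*}
    {Dg : γ → (Fin J → Bool) → Bool} {gS : Finset (Fin J) → γ} {c : γ → (Fin J → Bool) → ℝ}
    (hM : PropM Dg gS c) (hq : ∑ z, q z = 1) (hpos : ∀ z, 0 < q z) {g : γ}
    (hg : Monotone (Dg g)) :
    ∑ z, q z * c g z
      = ∑ z, q z * (hGam q (fun S => ∑ z, q z * c (gS S.1) z) z * if Dg g z then 1 else 0) := by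
  obtain ⟨-, htrue, hfalse, hmix⟩ := hM
  by_cases h1 : Dg g = fun _ => true
  · simp only [htrue g h1, h1, mul_zero, sum_const_zero, if_true, mul_one]
    exact (sum_mul_hGam_eq_zero hq _).symm
  by_cases h0 : Dg g = fun _ => false
  · simp only [hfalse g h0, h0, mul_zero, sum_const_zero, Bool.false_eq_true, if_false]
  rw [sum_mul_hGam_mul_boole hq hpos _ hg]
  calc ∑ z, q z * c g z
      = ∑ S ∈ univ.filter (fun S : Finset (Fin J) => S.Nonempty),
          Mcoef (spernerOf (Dg g)) S * ∑ z, q z * c (gS S) z := by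
        simp only [hmix g h1 h0, mul_sum]
        rw [sum_comm]
        exact sum_congr rfl fun S _ => sum_congr rfl fun z _ => by ring
    _ = _ := sum_subtype _ (fun S => by simp) (fun S => Mcoef (spernerOf (Dg g)) S * _)

lemma toReal_measure_eq_integral_of_eq_zero_or_one {Ω : Type*} [MeasurableSpace Ω]
    {μ : Measure Ω} {f : Ω → ℝ}
    (hf : ∀ ω, f ω = 0 ∨ f ω = 1) (hmeas : MeasurableSet {ω | f ω = 1}) :
    (μ {ω | f ω = 1}).toReal = ∫ ω, f ω ∂μ := by
  rw [← measureReal_def, ← integral_indicator_one hmeas]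
  congr 1
  funext ω
  rcases hf ω with h | h <;> simp [h]

section FiniteValued

variable {Ω α β : Type*} [MeasurableSpace Ω] {μ : Measure Ω} [IsFiniteMeasure μ]
  [Fintype α] [MeasurableSpace α] [MeasurableSingletonClass α]
  [Fintype β] [MeasurableSpace β] [MeasurableSingletonClass β]

lemma integral_comp_eq_sum_measureReal {X : Ω → α} (hX : Measurable X) (f : α → ℝ) :
    ∫ ω, f (X ω) ∂μ = ∑ x, μ.real (X ⁻¹' {x}) * f x := by
  rw [← integral_map hX.aemeasurable (measurable_of_finite f).aestronglyMeasurable,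
    integral_fintype Integrable.of_finite]
  exact sum_congr rfl fun x _ => by
    rw [map_measureReal_apply hX (measurableSet_singleton x), smul_eq_mul]

lemma ProbabilityTheory.IndepFun.integral_comp_eq_sum_measureReal {X : Ω → α} {Y : Ω → β}
    (hXY : IndepFun X Y μ) (hX : Measurable X) (hY : Measurable Y) (f : α → β → ℝ) :
    ∫ ω, f (X ω) (Y ω) ∂μ = ∑ x, μ.real (X ⁻¹' {x}) * ∑ y, μ.real (Y ⁻¹' {y}) * f x y := by
  rw [_root_.integral_comp_eq_sum_measureReal (hX.prodMk hY) fun p => f p.1 p.2,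
    Fintype.sum_prod_type]
  refine sum_congr rfl fun x _ => ?_
  rw [mul_sum]
  refine sum_congr rfl fun y _ => ?_
  have hpre : (fun ω => (X ω, Y ω)) ⁻¹' {(x, y)} = X ⁻¹' {x} ∩ Y ⁻¹' {y} := by
    ext ω
    simp
  rw [hpre, measureReal_def, hXY.measure_inter_preimage_eq_mul _ _ (measurableSet_singleton x)
    (measurableSet_singleton y), ENNReal.toReal_mul, ← measureReal_def, ← measureReal_def, mul_assoc]

end FiniteValued

lemma hB_eq_hGam {Ω : Type*} [MeasurableSpace Ω] {μ : Measure Ω} [IsFiniteMeasure μ] {J : ℕ}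
    {Z : Ω → Fin J → Bool} (hZ : Measurable Z) (lam : NonemptySubset J → ℝ) :
    hB μ Z lam = hGam (fun z => μ.real (Z ⁻¹' {z})) lam := by
  have hmean : EGamB μ Z = meanGam fun z => μ.real (Z ⁻¹' {z}) :=
    funext fun S => integral_comp_eq_sum_measureReal (μ := μ) hZ fun z => GamB J z S
  have hcov : SigB μ Z = covGam fun z => μ.real (Z ⁻¹' {z}) := by
    ext S T
    simp only [SigB, covGam, of_apply, ← hmean]
    exact integral_comp_eq_sum_measureReal hZ
      fun z => (GamB J z S - EGamB μ Z S) * (GamB J z T - EGamB μ Z T)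
  funext z
  simp only [hB, hGam, hmean, hcov]

theorem stmt14_general {Ω : Type*} [MeasurableSpace Ω] (μ : Measure Ω) [IsProbabilityMeasure μ]
    {J : ℕ} (Z : Ω → Fin J → Bool) (hZm : Measurable Z)
    (hfull : ∀ z : Fin J → Bool, 0 < μ {ω | Z ω = z})
    {γ : Type*} [Fintype γ] [MeasurableSpace γ] [MeasurableSingletonClass γ]
    (G : Ω → γ) (hGm : Measurable G)
    (Dg : γ → (Fin J → Bool) → Bool) (hVM : ∀ g, Monotone (Dg g))
    (gS : Finset (Fin J) → γ)
    (hindep : IndepFun G Z μ)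
    (c : γ → (Fin J → Bool) → ℝ) (hM : PropM Dg gS c) :
    (μ {ω | c (G ω) (Z ω) = 1}).toReal =
      ∫ ω, hB μ Z (fun S => ∫ ω', c (gS S.1) (Z ω') ∂μ) (Z ω) *
        (if Dg (G ω) (Z ω) = true then (1 : ℝ) else 0) ∂μ := by
  set q : (Fin J → Bool) → ℝ := fun z => μ.real (Z ⁻¹' {z})
  have hq : ∑ z, q z = 1 := by
    simpa using (integral_comp_eq_sum_measureReal (μ := μ) hZm fun _ => (1 : ℝ)).symm
  have hpos : ∀ z, 0 < q z := fun z => ENNReal.toReal_pos (hfull z).ne' (measure_ne_top μ _)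
  have hlam : (fun S : NonemptySubset J => ∫ ω, c (gS S.1) (Z ω) ∂μ)
      = fun S => ∑ z, q z * c (gS S.1) z :=
    funext fun S => integral_comp_eq_sum_measureReal hZm _
  have hmeas : MeasurableSet {ω | c (G ω) (Z ω) = 1} :=
    (hGm.prodMk hZm) (Set.to_countable {p : γ × (Fin J → Bool) | c p.1 p.2 = 1}).measurableSet
  rw [toReal_measure_eq_integral_of_eq_zero_or_one (fun ω => hM.1 _ _) hmeas, hB_eq_hGam hZm,
    hlam, hindep.integral_comp_eq_sum_measureReal hGm hZm c,
    hindep.integral_comp_eq_sum_measureReal hGm hZm fun g z => hGam q _ z * if Dg g z then 1 else 0]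
  exact sum_congr rfl fun g _ =>
    congrArg _ (hM.sum_mul_eq_sum_mul_hGam_mul_boole hq hpos (hVM g))

/-- Corollary to Theorem 1 (group size identification): under the assumptions of the
main identification theorem, `P(c(G,Z) = 1) = E[h(Z)·D]` with `h` built from
`λ_S = E[c(g(S), Z)]`. -/
theorem stmt14 {Ω : Type*} [MeasurableSpace Ω] (μ : Measure Ω) [IsProbabilityMeasure μ]
    {J : ℕ} (Z : Ω → Fin J → Bool) (hZm : Measurable Z)
    (hfull : ∀ z : Fin J → Bool, 0 < μ {ω | Z ω = z})
    {γ : Type*} [Fintype γ] [MeasurableSpace γ] [MeasurableSingletonClass γ]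
    (G : Ω → γ) (hGm : Measurable G)
    (Dg : γ → (Fin J → Bool) → Bool) (hVM : ∀ g, Monotone (Dg g))
    (gS : Finset (Fin J) → γ)
    (hgS : ∀ S z, Dg (gS S) z = decide (∀ j ∈ S, z j = true))
    (hindep : IndepFun G Z μ)
    (c : γ → (Fin J → Bool) → ℝ) (hM : PropM Dg gS c) :
    (μ {ω | c (G ω) (Z ω) = 1}).toReal =
      ∫ ω, hB μ Z (fun S => ∫ ω', c (gS S.1) (Z ω') ∂μ) (Z ω) *
        (if Dg (G ω) (Z ω) = true then (1 : ℝ) else 0) ∂μ :=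
  stmt14_general μ Z hZm hfull G hGm Dg hVM gS hindep c hM
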